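/- Let p, q be integers with 2 ≤ p < q and gcd(p, q) = 1, let G = ⟨x, y ∣ x^p = y^q⟩, and let f : G →* H be a surjective group homomorphism onto a non-abelian group H. Then, with commutator convention [a,b] = a⁻¹b⁻¹ab, the element f([x, y]) is a generalized torsion element of H. -/

import Mathlib

/-- `g` is a generalized torsion element of `G`: `g ≠ 1` and some non-empty
finite product of conjugates of `g` equals `1`. -/
def IsGeneralizedTorsion {G : Type*} [Group G] (g : G) : Prop :=
  g ≠ 1 ∧ ∃ xs : List G, xs ≠ [] ∧ (xs.map (fun x => x * g * x⁻¹)).prod = 1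

/-- The commutator, with the convention `[a,b] = a⁻¹b⁻¹ab`. -/
def com {G : Type*} [Group G] (a b : G) : G := a⁻¹ * b⁻¹ * a * b

/-- The single relator `x^p y^{-q}` of the `(p,q)`-torus knot group
`⟨x, y ∣ x^p = y^q⟩`; generator `0` is `x` and generator `1` is `y`. -/
def torusRels (p q : ℤ) : Set (FreeGroup (Fin 2)) :=
  {FreeGroup.of 0 ^ p * (FreeGroup.of 1 ^ q)⁻¹}

/-!
The power `x^p = y^q` commutes with both `x` and `y`, so `[x^p, y] = 1`; expanding `[x^p, y]`
writes it as a product of `p` conjugates of `[x, y]`. This survives in every quotient, and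
`f([x,y]) ≠ 1` because a group generated by two commuting elements is abelian.
-/

section Commutator

variable {G : Type*} [Group G]

theorem com_eq_one_iff {a b : G} : com a b = 1 ↔ Commute a b := by
  rw [← Commute.inv_inv_iff, ← commutatorElement_eq_one_iff_commute, com, commutatorElement_def,
    inv_inv, inv_inv]

theorem com_mul_left (a b c : G) : com (a * b) c = b⁻¹ * com a c * b * com b c := by
  simp only [com]; group

theorem exists_conj_prod_eq_com_pow_left (u v : G) (n : ℕ) :
    ∃ xs : List G, xs.length = n ∧ (xs.map fun x => x * com u v * x⁻¹).prod = com (u ^ n) v := by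
  induction n with
  | zero => exact ⟨[], rfl, by simp [com]⟩
  | succ n ih =>
    obtain ⟨xs, hlen, hprod⟩ := ih
    refine ⟨xs.map (u⁻¹ * ·) ++ [1], by simp [hlen], ?_⟩
    have hconj : (MulAut.conj u⁻¹) (com (u ^ n) v)
        = ((xs.map (u⁻¹ * ·)).map fun x => x * com u v * x⁻¹).prod := by
      rw [← hprod, map_list_prod, List.map_map, List.map_map]
      congr 1
      refine List.map_congr_left fun x _ => ?_
      simp only [Function.comp_apply, MulAut.conj_apply, mul_inv_rev, inv_inv]
      group
    rw [pow_succ, com_mul_left, List.map_append, List.prod_append, ← hconj]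
    simp

theorem isGeneralizedTorsion_com_of_com_pow_left_eq_one {u v : G} {n : ℕ} (h : com u v ≠ 1)
    (hn : n ≠ 0) (hpow : com (u ^ n) v = 1) : IsGeneralizedTorsion (com u v) := by
  obtain ⟨xs, hlen, hprod⟩ := exists_conj_prod_eq_com_pow_left u v n
  exact ⟨h, xs, by rintro rfl; exact hn hlen.symm, hprod.trans hpow⟩

end Commutator

theorem PresentedGroup.commute_of_commute_map_of {α : Type*} {rels : Set (FreeGroup α)}
    {H : Type*} [Group H] (f : PresentedGroup rels →* H) (hf : Function.Surjective f)
    (hgen : ∀ i j, Commute (f (of i)) (f (of j))) (a b : H) : Commute a b := by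
  have hclosure : Subgroup.closure (Set.range (f ∘ of)) = ⊤ := by
    rw [Set.range_comp, ← MonoidHom.map_closure, closure_range_of, Subgroup.map_top_of_surjective f hf]
  have hle := hclosure ▸ Subgroup.closure_le_centralizer_centralizer (Set.range (f ∘ of))
  refine Set.centralizer_centralizer_comm_of_comm ?_ a (hle trivial) b (hle trivial)
  rintro _ ⟨i, rfl⟩ _ ⟨j, rfl⟩
  exact hgen i j

theorem torusRels_of_zpow_eq (p q : ℤ) :
    (PresentedGroup.of 0 : PresentedGroup (torusRels p q)) ^ p = PresentedGroup.of 1 ^ q := by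
  have h := PresentedGroup.one_of_mem (rels := torusRels p q) rfl
  rwa [map_mul, map_inv, map_zpow, map_zpow, mul_inv_eq_one] at h

theorem torusKnotGroup_quotient_commutator_isGeneralizedTorsion_general
    (p q : ℤ) (hp : 2 ≤ p)
    {H : Type*} [Group H] (f : PresentedGroup (torusRels p q) →* H)
    (hf : Function.Surjective f) (hH : ∃ a b : H, a * b ≠ b * a) :
    IsGeneralizedTorsion
      (f (com (PresentedGroup.of 0) (PresentedGroup.of 1))) := by
  lift p to ℕ using by omega
  set u := f (PresentedGroup.of 0)
  set v := f (PresentedGroup.of 1)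
  have hrel : u ^ p = v ^ q := by
    rw [← zpow_natCast, ← map_zpow, ← map_zpow, torusRels_of_zpow_eq]
  have hcom : f (com (PresentedGroup.of 0) (PresentedGroup.of 1)) = com u v := by
    simp only [com, map_mul, map_inv, u, v]
  rw [hcom]
  refine isGeneralizedTorsion_com_of_com_pow_left_eq_one ?_ (by omega)
    (com_eq_one_iff.mpr (hrel ▸ (Commute.refl v).zpow_left q))
  intro huv
  obtain ⟨a, b, hab⟩ := hH
  refine hab (PresentedGroup.commute_of_commute_map_of f hf ?_ a b)
  simp only [Fin.forall_fin_two]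
  exact ⟨⟨.refl u, com_eq_one_iff.mp huv⟩, ⟨(com_eq_one_iff.mp huv).symm, .refl v⟩⟩

/-- If `f` is a surjection from the `(p,q)`-torus knot group
`⟨x, y ∣ x^p = y^q⟩` (with `2 ≤ p < q`, `gcd(p,q) = 1`) onto a non-abelian
group `H`, then `f([x,y])` is a generalized torsion element of `H`. -/
theorem torusKnotGroup_quotient_commutator_isGeneralizedTorsion
    (p q : ℤ) (hp : 2 ≤ p) (hpq : p < q) (hgcd : Int.gcd p q = 1)
    {H : Type*} [Group H] (f : PresentedGroup (torusRels p q) →* H)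
    (hf : Function.Surjective f) (hH : ∃ a b : H, a * b ≠ b * a) :
    IsGeneralizedTorsion
      (f (com (PresentedGroup.of 0) (PresentedGroup.of 1))) :=
  torusKnotGroup_quotient_commutator_isGeneralizedTorsion_general p q hp f hf hH
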